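/- For any norm X on ℝ², the generalized pi-value satisfies ϖ(X) ≥ 3. -/

import Mathlib

open Set

noncomputable section

/-- `N` is a norm on the real vector space `E`. -/
structure IsNorm {E : Type*} [AddCommGroup E] [Module ℝ E] (N : E → ℝ) : Prop where
  eq_zero_iff : ∀ v : E, N v = 0 ↔ v = 0
  smul_eq : ∀ (c : ℝ) (v : E), N (c • v) = |c| * N v
  add_le : ∀ u v : E, N (u + v) ≤ N u + N v

/-- Length of the path `φ` on `[a, b]`, with respect to the (norm) function `N`:
the supremum over partitions `a = t 0 ≤ ⋯ ≤ t n = b` of the sums of distances. -/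
noncomputable def pathLen {E : Type*} [AddCommGroup E] [Module ℝ E] (N : E → ℝ)
    (φ : ℝ → E) (a b : ℝ) : ENNReal :=
  ⨆ (n : ℕ) (t : Fin (n + 1) → ℝ) (_ : Monotone t) (_ : t 0 = a)
    (_ : t (Fin.last n) = b),
    ∑ i : Fin n, ENNReal.ofReal (N (φ (t i.succ) - φ (t i.castSucc)))

/-- `φ` is a parametrization of the boundary loop of `B ⊆ ℝ² = ℂ`. -/
def IsBoundaryParam (B : Set ℂ) (φ : ℝ → ℂ) : Prop :=
  Continuous φ ∧ (∀ t : ℝ, φ (t + 1) = φ t) ∧ Set.InjOn φ (Set.Ico 0 1) ∧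
    φ '' Set.Ico 0 1 = frontier B

/-- A convex body in the plane: compact, convex, with nonempty interior. -/
def IsConvexBody (B : Set ℂ) : Prop :=
  IsCompact B ∧ Convex ℝ B ∧ (interior B).Nonempty

/-- `C` is a convex arc from `u` to `v`: either the segment `[u, v]`, or a set whose
union with the segment `[v, u]` is the boundary of a convex body (meeting the
segment only at the endpoints). -/
def IsConvexArc (C : Set ℂ) (u v : ℂ) : Prop :=
  u ∈ C ∧ v ∈ C ∧
    (C = segment ℝ u v ∨
      ∃ B : Set ℂ, IsConvexBody B ∧ C ∪ segment ℝ v u = frontier B ∧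
        C ∩ segment ℝ v u = {u, v})

/-- `φ` is a convex path from `u` to `v`, parametrized on `[0, 1]`. -/
def IsConvexPath (φ : ℝ → ℂ) (u v : ℂ) : Prop :=
  Continuous φ ∧ φ 0 = u ∧ φ 1 = v ∧ Set.InjOn φ (Set.Icc 0 1) ∧
    IsConvexArc (φ '' Set.Icc 0 1) u v

/-!
Take `u = φ 0` and, by the intermediate value theorem along the unit circle from `u` to `-u`,
a unit vector `v` with `N (v - u) = 1`. The six unit vectors `±u, ±v, ±(v - u)` are pairwise at
distance at least `1`: each difference is, up to sign, one of these vectors or a sum `x + y` of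
two unit vectors with `N (x - y) ≤ 1`, and `2 = N (2 • x) ≤ N (x + y) + N (x - y)`. Partitioning
`[0, 1]` at their parameters gives an inscribed hexagon of length at least `6`.
-/

open Topology

theorem Finset.orderEmbOfFin_zero_eq {α : Type*} [LinearOrder α] {T : Finset α} {n : ℕ}
    (hT : T.card = n + 1) {a : α} (ha : a ∈ T) (h : ∀ r ∈ T, a ≤ r) :
    T.orderEmbOfFin hT 0 = a := by
  rw [← Fin.mk_zero, T.orderEmbOfFin_zero hT n.succ_pos]
  exact le_antisymm (T.min'_le a ha) (T.le_min' _ a h)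

theorem Finset.orderEmbOfFin_last_eq {α : Type*} [LinearOrder α] {T : Finset α} {n : ℕ}
    (hT : T.card = n + 1) {b : α} (hb : b ∈ T) (h : ∀ r ∈ T, r ≤ b) :
    T.orderEmbOfFin hT (Fin.last n) = b := by
  rw [show Fin.last n = ⟨n + 1 - 1, by omega⟩ from Fin.ext (by simp),
    T.orderEmbOfFin_last hT n.succ_pos]
  exact le_antisymm (T.max'_le _ b h) (T.le_max' b hb)

/- Cut `[0, 1]` at `1` and at one parameter of each point of `P`, the parameter of `φ 0` being `0`.
Consecutive cuts have distinct images unless they are `0` and `1`, which `2 ≤ #P` excludes. -/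
theorem exists_partition_of_subset_image {α : Type*} {φ : ℝ → α} {P : Finset α} (hφ : φ 1 = φ 0)
    (hP : ↑P ⊆ φ '' Ico 0 1) (h0 : φ 0 ∈ P) (hcard : 2 ≤ P.card) :
    ∃ t : Fin (P.card + 1) → ℝ, Monotone t ∧ t 0 = 0 ∧ t (Fin.last _) = 1 ∧
      (∀ j, φ (t j) ∈ P) ∧ ∀ i : Fin P.card, φ (t i.succ) ≠ φ (t i.castSucc) := by
  classical
  obtain ⟨s, hs⟩ : ∃ s : α → ℝ, ∀ x ∈ P, s x ∈ Ico 0 1 ∧ φ (s x) = x ∧ (x = φ 0 → s x = 0) := by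
    choose! s hsI hsφ using fun x (hx : x ∈ P) => hP hx
    refine ⟨fun x => if x = φ 0 then 0 else s x, fun x hx => ?_⟩
    dsimp only
    split_ifs with h
    · exact ⟨⟨le_rfl, one_pos⟩, h.symm, fun _ => rfl⟩
    · exact ⟨hsI x hx, hsφ x hx, fun h' => absurd h' h⟩
  set T := insert 1 (P.image s)
  have hT : T.card = P.card + 1 := by
    rw [Finset.card_insert_of_notMem, Finset.card_image_of_injOn]
    · intro x hx y hy hxy
      rw [← (hs x hx).2.1, ← (hs y hy).2.1, hxy]
    · simp only [Finset.mem_image, not_exists, not_and]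
      exact fun x hx h => (hs x hx).1.2.ne h
  have hT01 : ∀ r ∈ T, r ∈ Icc (0 : ℝ) 1 := by
    simp only [T, Finset.forall_mem_insert, Finset.forall_mem_image]
    exact ⟨⟨zero_le_one, le_rfl⟩, fun x hx => Ico_subset_Icc_self (hs x hx).1⟩
  set t := T.orderEmbOfFin hT
  have ht0 : t 0 = 0 := Finset.orderEmbOfFin_zero_eq hT
    (Finset.mem_insert_of_mem (Finset.mem_image.2 ⟨φ 0, h0, (hs _ h0).2.2 rfl⟩))
    fun r hr => (hT01 r hr).1
  have htl : t (Fin.last _) = 1 :=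
    Finset.orderEmbOfFin_last_eq hT (Finset.mem_insert_self _ _) fun r hr => (hT01 r hr).2
  have hnode : ∀ j ≠ Fin.last _, φ (t j) ∈ P ∧ t j = s (φ (t j)) := by
    intro j hj
    have hlt : t j < 1 := htl ▸ t.strictMono (Fin.lt_last_iff_ne_last.2 hj)
    obtain h1 | hj := Finset.mem_insert.1 (T.orderEmbOfFin_mem hT j)
    · exact absurd h1 hlt.ne
    obtain ⟨x, hx, hxj⟩ := Finset.mem_image.1 hj
    rw [← hxj, (hs x hx).2.1]
    exact ⟨hx, rfl⟩
  have hinj : ∀ j ≠ Fin.last _, ∀ k ≠ Fin.last _, φ (t j) = φ (t k) → j = k := fun j hj k hk h =>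
    t.injective ((hnode j hj).2.trans (h ▸ (hnode k hk).2.symm))
  refine ⟨t, t.monotone, ht0, htl, fun j => ?_, fun i h => ?_⟩
  · rcases eq_or_ne j (Fin.last _) with rfl | hj
    · rw [htl, hφ]; exact h0
    · exact (hnode j hj).1
  rcases eq_or_ne i.succ (Fin.last _) with hi | hi
  · rw [hi, htl, hφ, ← ht0] at h
    have hi0 := hinj 0 (fun h => by simp [Fin.ext_iff] at h; omega) _ (Fin.castSucc_ne_last i) h
    simp only [Fin.ext_iff, Fin.val_succ, Fin.val_last, Fin.val_castSucc, Fin.val_zero] at hi hi0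
    omega
  · exact Fin.castSucc_lt_succ.ne' (hinj _ hi _ (Fin.castSucc_ne_last i) h)

section

variable {E : Type*} [AddCommGroup E] [Module ℝ E] {N : E → ℝ}

namespace IsNorm

theorem map_zero (hN : IsNorm N) : N 0 = 0 := (hN.eq_zero_iff 0).2 rfl

theorem map_neg (hN : IsNorm N) (x : E) : N (-x) = N x := by
  simpa using hN.smul_eq (-1) x

theorem nonneg (hN : IsNorm N) (x : E) : 0 ≤ N x := by
  have h := hN.add_le x (-x)
  rw [add_neg_cancel, hN.map_zero, hN.map_neg] at h
  linarith

theorem convexOn (hN : IsNorm N) : ConvexOn ℝ univ N := by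
  refine ⟨convex_univ, fun x _ y _ a b ha hb _ => ?_⟩
  calc N (a • x + b • y) ≤ N (a • x) + N (b • y) := hN.add_le _ _
    _ = a • N x + b • N y := by
      rw [hN.smul_eq, hN.smul_eq, abs_of_nonneg ha, abs_of_nonneg hb, smul_eq_mul, smul_eq_mul]

theorem frontier_setOf_le_one [TopologicalSpace E] [ContinuousSMul ℝ E] (hN : IsNorm N)
    (hc : Continuous N) : frontier {x | N x ≤ 1} = {x | N x = 1} := by
  refine (frontier_le_subset_eq hc continuous_const).antisymm fun x (hx : N x = 1) => ?_
  refine ⟨subset_closure hx.le, fun hint => ?_⟩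
  have hnear : ∀ᶠ c : ℝ in 𝓝[>] 1, c • x ∈ {x | N x ≤ 1} :=
    nhdsWithin_le_nhds <| (continuous_id.smul continuous_const).tendsto' 1 x (one_smul ℝ x)
      |>.eventually (mem_interior_iff_mem_nhds.1 hint)
  obtain ⟨c, hcx, hc1⟩ := (hnear.and self_mem_nhdsWithin).exists
  have : c * 1 ≤ 1 := by simpa [hN.smul_eq, hx, abs_of_pos (one_pos.trans hc1)] using hcx
  linarith [show 1 < c from hc1]

theorem one_le_add (hN : IsNorm N) {x y : E} (hx : N x = 1)
    (hxy : N (x - y) ≤ 1) : 1 ≤ N (x + y) := by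
  have h := hN.add_le (x + y) (x - y)
  rw [show x + y + (x - y) = (2 : ℝ) • x by module, hN.smul_eq, hx] at h
  norm_num at h
  linarith

end IsNorm

def hexagon (u v : E) : Fin 6 → E := ![u, v, v - u, -u, -v, u - v]

theorem IsNorm.pairwise_one_le_hexagon (hN : IsNorm N) {u v : E} (hu : N u = 1) (hv : N v = 1)
    (hvu : N (v - u) = 1) : Pairwise fun i j => 1 ≤ N (hexagon u v i - hexagon u v j) := by
  have huv : N (u - v) = 1 := by rw [← neg_sub, hN.map_neg, hvu]
  have h1 := hN.one_le_add hu huv.le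
  have h2 := hN.one_le_add (y := u) hu (by simp [hN.map_zero])
  have h3 := hN.one_le_add (y := v) hv (by simp [hN.map_zero])
  have h4 := hN.one_le_add (y := v - u) hvu (by simp [hN.map_zero])
  have h5 := hN.one_le_add (y := u - v) hu (by simp [hv])
  have h6 := hN.one_le_add (y := v - u) hv (by simp [hu])
  have of_eq_or_eq_neg : ∀ {d : E}, 1 ≤ N d → ∀ w, w = d ∨ w = -d → 1 ≤ N w := by
    rintro d hd w (rfl | rfl) <;> simpa [hN.map_neg]
  intro i j hij
  fin_cases i <;> fin_cases j <;>
    simp only [hexagon, Fin.zero_eta, Fin.mk_one, Fin.reduceFinMk, Matrix.cons_val] <;>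
    first
    | exact absurd rfl hij
    | exact of_eq_or_eq_neg hu.ge _ (by first | (left; abel1) | (right; abel1))
    | exact of_eq_or_eq_neg hv.ge _ (by first | (left; abel1) | (right; abel1))
    | exact of_eq_or_eq_neg hvu.ge _ (by first | (left; abel1) | (right; abel1))
    | exact of_eq_or_eq_neg h1 _ (by first | (left; abel1) | (right; abel1))
    | exact of_eq_or_eq_neg h2 _ (by first | (left; abel1) | (right; abel1))
    | exact of_eq_or_eq_neg h3 _ (by first | (left; abel1) | (right; abel1))
    | exact of_eq_or_eq_neg h4 _ (by first | (left; abel1) | (right; abel1))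
    | exact of_eq_or_eq_neg h5 _ (by first | (left; abel1) | (right; abel1))
    | exact of_eq_or_eq_neg h6 _ (by first | (left; abel1) | (right; abel1))

theorem IsNorm.map_hexagon (hN : IsNorm N) {u v : E} (hu : N u = 1) (hv : N v = 1)
    (hvu : N (v - u) = 1) (i : Fin 6) : N (hexagon u v i) = 1 := by
  have huv : N (u - v) = 1 := by rw [← neg_sub, hN.map_neg, hvu]
  fin_cases i <;> simp [hexagon, hN.map_neg, hu, hv, hvu, huv]

theorem sum_le_pathLen {φ : ℝ → E} {a b : ℝ} {n : ℕ} {t : Fin (n + 1) → ℝ} (ht : Monotone t)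
    (h0 : t 0 = a) (hn : t (Fin.last n) = b) :
    ∑ i : Fin n, ENNReal.ofReal (N (φ (t i.succ) - φ (t i.castSucc))) ≤ pathLen N φ a b :=
  le_iSup_of_le n <| le_iSup_of_le t <| le_iSup_of_le ht <| le_iSup_of_le h0 <|
    le_iSup_of_le hn le_rfl

theorem card_mul_le_pathLen {φ : ℝ → E} {P : Finset E} {δ : ℝ} (hφ : φ 1 = φ 0)
    (hP : ↑P ⊆ φ '' Ico 0 1) (h0 : φ 0 ∈ P) (hcard : 2 ≤ P.card)
    (hsep : (P : Set E).Pairwise fun x y => δ ≤ N (x - y)) :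
    P.card * ENNReal.ofReal δ ≤ pathLen N φ 0 1 := by
  obtain ⟨t, ht, ht0, htl, hmem, hne⟩ := exists_partition_of_subset_image hφ hP h0 hcard
  calc (P.card : ENNReal) * ENNReal.ofReal δ = ∑ _i : Fin P.card, ENNReal.ofReal δ := by simp
    _ ≤ ∑ i : Fin P.card, ENNReal.ofReal (N (φ (t i.succ) - φ (t i.castSucc))) :=
      Finset.sum_le_sum fun i _ => ENNReal.ofReal_le_ofReal (hsep (hmem _) (hmem _) (hne i))
    _ ≤ pathLen N φ 0 1 := sum_le_pathLen ht ht0 htl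

end

theorem IsNorm.continuous {E : Type*} [NormedAddCommGroup E] [NormedSpace ℝ E]
    [FiniteDimensional ℝ E] {N : E → ℝ} (hN : IsNorm N) : Continuous N :=
  continuousOn_univ.1 (hN.convexOn.continuousOn isOpen_univ)

theorem IsNorm.exists_eq_one_sub_eq_one {N : ℂ → ℝ} (hN : IsNorm N) {u : ℂ} (hu : N u = 1) :
    ∃ v, N v = 1 ∧ N (v - u) = 1 := by
  have hu0 : u ≠ 0 := by rintro rfl; simp [hN.map_zero] at hu
  set w : ℝ → ℂ := fun θ => Complex.exp (θ * Complex.I) * u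
  have hw : ∀ θ, N (w θ) ≠ 0 := fun θ => by
    simp [w, hN.eq_zero_iff, Complex.exp_ne_zero, hu0]
  set g : ℝ → ℂ := fun θ => (N (w θ))⁻¹ • w θ
  have hg : ∀ θ, N (g θ) = 1 := fun θ => by
    rw [hN.smul_eq, abs_inv, abs_of_nonneg (hN.nonneg _), inv_mul_cancel₀ (hw θ)]
  have hgc : Continuous g := by
    have hwc : Continuous w := by fun_prop
    exact ((hN.continuous.comp hwc).inv₀ hw).smul hwc
  have hg0 : g 0 = u := by simp [g, w, hu]
  have hgπ : g Real.pi = -u := by simp [g, w, Complex.exp_pi_mul_I, hN.map_neg, hu]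
  obtain ⟨θ, -, hθ⟩ := intermediate_value_Icc Real.pi_pos.le
    (hN.continuous.comp (hgc.sub continuous_const)).continuousOn
    (show (1 : ℝ) ∈ Icc (N (g 0 - u)) (N (g Real.pi - u)) by
      rw [hg0, hgπ, sub_self, hN.map_zero, show -u - u = (-2 : ℝ) • u by module, hN.smul_eq, hu]
      norm_num)
  exact ⟨g θ, hg θ, hθ⟩

/-- For any norm on the plane, the generalized pi-value is at least 3. -/
theorem stmt16 (N : ℂ → ℝ) (hN : IsNorm N) (φ : ℝ → ℂ)
    (hφ : IsBoundaryParam {z : ℂ | N z ≤ 1} φ) :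
    3 ≤ pathLen N φ 0 1 / 2 := by
  obtain ⟨-, hper, -, himg⟩ := hφ
  rw [hN.frontier_setOf_le_one hN.continuous] at himg
  have hu : N (φ 0) = 1 := himg.subset ⟨0, ⟨le_rfl, one_pos⟩, rfl⟩
  obtain ⟨v, hv, hvu⟩ := hN.exists_eq_one_sub_eq_one hu
  have hsep := hN.pairwise_one_le_hexagon hu hv hvu
  set p := hexagon (φ 0) v
  have hinj : Function.Injective p := fun i j hij => by
    by_contra hne
    exact absurd (hsep hne) (by simp [hij, hN.map_zero])
  have hcard : (Finset.univ.image p).card = 6 := by simp [Finset.card_image_of_injective _ hinj]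
  have h6 := card_mul_le_pathLen (P := Finset.univ.image p) (δ := 1) (by simpa using hper 0)
    (by simpa [himg, Set.range_subset_iff] using hN.map_hexagon hu hv hvu)
    (Finset.mem_image_of_mem p (Finset.mem_univ 0)) (by omega)
    (by simpa [Set.Pairwise] using fun i j hij => hsep (ne_of_apply_ne p hij))
  rw [hcard, ENNReal.ofReal_one, mul_one, Nat.cast_ofNat] at h6
  rw [ENNReal.le_div_iff_mul_le (Or.inl two_ne_zero) (Or.inl ENNReal.ofNat_ne_top)]
  norm_num [h6]

end
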